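/- arXiv:1702.04369 — 2 statements merged into one kernel-verified Lean document; each statement's English description precedes it below -/
import Mathlib

section
/- Let Φ : [0,1] → ℝ be a non-negative convex function. Then for all t in [0, 1/2], one has Φ(t) + Φ(1−t) ≤ Φ(0) + Φ(1) − 2t·(Φ(0) + Φ(1) − 2Φ(1/2)). -/
/-- For a non-negative convex function `Φ` on `[0,1]` and `t ∈ [0,1/2]`,
`Φ t + Φ (1-t) ≤ Φ 0 + Φ 1 - 2*t*(Φ 0 + Φ 1 - 2*Φ (1/2))`. -/
theorem stmt_0 (Φ : ℝ → ℝ)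
    (hconv : ConvexOn ℝ (Set.Icc (0:ℝ) 1) Φ)
    (hnonneg : ∀ s ∈ Set.Icc (0:ℝ) 1, 0 ≤ Φ s) :
    ∀ t ∈ Set.Icc (0:ℝ) (1/2),
      Φ t + Φ (1 - t) ≤ Φ 0 + Φ 1 - 2 * t * (Φ 0 + Φ 1 - 2 * Φ (1/2)) := by
  intro t ht
  obtain ⟨ht0, ht1⟩ := ht
  have h0 : (0:ℝ) ∈ Set.Icc (0:ℝ) 1 := by constructor <;> norm_num
  have h1 : (1:ℝ) ∈ Set.Icc (0:ℝ) 1 := by constructor <;> norm_num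
  have hh : (1/2:ℝ) ∈ Set.Icc (0:ℝ) 1 := by constructor <;> norm_num
  have hw1 : (0:ℝ) ≤ 1 - 2*t := by linarith
  have hw2 : (0:ℝ) ≤ 2*t := by linarith
  have hsum : (1 - 2*t) + 2*t = 1 := by ring
  have hA := hconv.2 h0 hh hw1 hw2 hsum
  have hB := hconv.2 h1 hh hw1 hw2 hsum
  have e1 : (1 - 2*t) • (0:ℝ) + (2*t) • (1/2:ℝ) = t := by
    simp [smul_eq_mul]; ring
  have e2 : (1 - 2*t) • (1:ℝ) + (2*t) • (1/2:ℝ) = 1 - t := by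
    simp [smul_eq_mul]; ring
  rw [e1] at hA
  rw [e2] at hB
  simp only [smul_eq_mul] at hA hB
  linarith
end

section
/- Let Y be a proper CAT(0) metric space and let μ₁, μ₂ be positive finite Borel measures on Y, both supported on a ball B(y₀,R), each of total mass at least m > 0, and with total variation distance ‖μ₁ − μ₂‖ ≤ ε. Then the centers of mass y_{μ₁} and y_{μ₂} (the unique minimizers of Q_{μᵢ}(y) = ∫ d(y,w)² dμᵢ(w)) satisfy d(y_{μ₁}, y_{μ₂}) ≤ 4εR/m. -/
/-!
Iterating the CN inequality at the dyadic points between a center of mass `p` of `μ` and any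
point `q` shows that the Fréchet function `Q_μ(y) = ∫ d(y,w)² dμ(w)` grows quadratically away from
its minimum: `Q_μ(p) + μ(Y) d(p,q)² ≤ Q_μ(q)`. Taking `q = y₀` puts the centers in the ball
`B(y₀,R)`. Taking `q` to be the other center and adding the two inequalities bounds `2m d(p₁,p₂)²`
by `∫ f dμ₁ - ∫ f dμ₂` with `f = d(p₂,·)² - d(p₁,·)²`; on the ball `|f| ≤ 4R d(p₁,p₂)`, so through
the Jordan decomposition of `μ₁ - μ₂` this difference is at most `4R d(p₁,p₂) ε`.
-/

open MeasureTheory Filter Metric Set Topology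

def HasMidpoints (Y : Type*) [MetricSpace Y] : Prop :=
  ∀ y₁ y₂ : Y, ∃ y₃ : Y, dist y₁ y₃ = dist y₁ y₂ / 2 ∧ dist y₂ y₃ = dist y₁ y₂ / 2

/-- The Bruhat–Tits CN inequality, multiplied by 2, for a midpoint `y₃` of `y₁` and `y₂`. Together
with `HasMidpoints` it characterises CAT(0) spaces among complete metric spaces. -/
def CNInequality (Y : Type*) [MetricSpace Y] : Prop :=
  ∀ y y₁ y₂ y₃ : Y, dist y₁ y₃ = dist y₁ y₂ / 2 → dist y₂ y₃ = dist y₁ y₂ / 2 →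
    (1 / 2) * dist y₁ y₂ ^ 2 ≤ dist y y₁ ^ 2 + dist y y₂ ^ 2 - 2 * dist y y₃ ^ 2

theorem exists_dyadic_point_dist_sq_le {Y : Type*} [MetricSpace Y] (hmid : HasMidpoints Y)
    (hcn : CNInequality Y) (p q : Y) (n : ℕ) :
    ∃ z : Y, dist p z = 2⁻¹ ^ n * dist p q ∧ ∀ w : Y,
      dist z w ^ 2 ≤ (1 - 2⁻¹ ^ n) * dist p w ^ 2 + 2⁻¹ ^ n * dist q w ^ 2
        - 2⁻¹ ^ n * (1 - 2⁻¹ ^ n) * dist p q ^ 2 := by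
  induction n with
  | zero => exact ⟨q, by simp, fun w => by simp⟩
  | succ n ih =>
    obtain ⟨z, hpz, hz⟩ := ih
    obtain ⟨c, hpc, hzc⟩ := hmid p z
    refine ⟨c, by rw [hpc, hpz, pow_succ]; ring, fun w => ?_⟩
    have hc := hcn w p z c hpc hzc
    simp only [dist_comm w, hpz] at hc
    rw [pow_succ (2⁻¹ : ℝ) n]
    linarith [hz w]

section FrechetFunction

variable {Y : Type*} [MetricSpace Y] [MeasurableSpace Y]

/-- The function `Q_μ` whose minimizers are the centers of mass of `μ`. -/
noncomputable def frechetFunction (μ : Measure Y) (y : Y) : ℝ := ∫ w, dist y w ^ 2 ∂μ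

variable {μ : Measure Y} [IsFiniteMeasure μ]

theorem exists_frechetFunction_dyadic_le (hmid : HasMidpoints Y) (hcn : CNInequality Y)
    (hint : ∀ y : Y, Integrable (fun w => dist y w ^ 2) μ) (p q : Y) (n : ℕ) :
    ∃ z : Y, frechetFunction μ z ≤ (1 - 2⁻¹ ^ n) * frechetFunction μ p
      + 2⁻¹ ^ n * frechetFunction μ q - μ.real univ * (2⁻¹ ^ n * (1 - 2⁻¹ ^ n) * dist p q ^ 2) := by
  obtain ⟨z, -, hz⟩ := exists_dyadic_point_dist_sq_le hmid hcn p q n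
  refine ⟨z, ?_⟩
  have hlin : Integrable (fun w => (1 - 2⁻¹ ^ n) * dist p w ^ 2 + 2⁻¹ ^ n * dist q w ^ 2) μ :=
    ((hint p).const_mul _).add ((hint q).const_mul _)
  have h : ∫ w, dist z w ^ 2 ∂μ ≤ ∫ w, ((1 - 2⁻¹ ^ n) * dist p w ^ 2 + 2⁻¹ ^ n * dist q w ^ 2
      - 2⁻¹ ^ n * (1 - 2⁻¹ ^ n) * dist p q ^ 2) ∂μ :=
    integral_mono (hint z) (hlin.sub (integrable_const _)) hz
  rwa [integral_sub hlin (integrable_const _), integral_add ((hint p).const_mul _)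
    ((hint q).const_mul _), integral_const_mul, integral_const_mul, integral_const,
    smul_eq_mul] at h

/-- The midpoint alone would give only `μ(Y) / 2`; letting the dyadic points tend to `p`
doubles it. -/
theorem frechetFunction_add_le_of_isMinOn (hmid : HasMidpoints Y) (hcn : CNInequality Y)
    (hint : ∀ y : Y, Integrable (fun w => dist y w ^ 2) μ) {p : Y}
    (hp : IsMinOn (frechetFunction μ) univ p) (q : Y) :
    frechetFunction μ p + μ.real univ * dist p q ^ 2 ≤ frechetFunction μ q := by
  have hdyadic : ∀ n : ℕ,
      frechetFunction μ p + (1 - 2⁻¹ ^ n) * (μ.real univ * dist p q ^ 2) ≤ frechetFunction μ q := by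
    intro n
    obtain ⟨z, hz⟩ := exists_frechetFunction_dyadic_le hmid hcn hint p q n
    have hmin : frechetFunction μ p ≤ frechetFunction μ z := hp (mem_univ z)
    have ht : (0 : ℝ) < 2⁻¹ ^ n := by positivity
    refine le_of_mul_le_mul_left ?_ ht
    nlinarith
  have hlim : Tendsto
      (fun n : ℕ => frechetFunction μ p + (1 - 2⁻¹ ^ n) * (μ.real univ * dist p q ^ 2))
      atTop (𝓝 (frechetFunction μ p + (1 - 0) * (μ.real univ * dist p q ^ 2))) :=
    tendsto_const_nhds.add (((tendsto_pow_atTop_nhds_zero_of_lt_one (r := (2⁻¹ : ℝ)) (by norm_num)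
      (by norm_num)).const_sub 1).mul_const _)
  simpa using le_of_tendsto' hlim hdyadic

end FrechetFunction

section Ball

variable {Y : Type*} [MetricSpace Y] [MeasurableSpace Y] {μ : Measure Y} [IsFiniteMeasure μ]

theorem frechetFunction_le_of_measure_compl_closedBall (y₀ : Y) {R : ℝ}
    (hsupp : μ (closedBall y₀ R)ᶜ = 0) : frechetFunction μ y₀ ≤ μ.real univ * R ^ 2 := by
  have hbound : ∀ᵐ w ∂μ, dist y₀ w ^ 2 ≤ R ^ 2 := by
    filter_upwards [mem_ae_iff.2 hsupp] with w hw
    exact pow_le_pow_left₀ dist_nonneg (by rwa [dist_comm]) 2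
  simpa [frechetFunction, mul_comm] using
    integral_mono_of_nonneg (ae_of_all _ fun w => by positivity) (integrable_const _) hbound

theorem dist_le_of_isMinOn_frechetFunction (hmid : HasMidpoints Y) (hcn : CNInequality Y)
    (hint : ∀ y : Y, Integrable (fun w => dist y w ^ 2) μ) (hμ : 0 < μ.real univ)
    {y₀ : Y} {R : ℝ} (hsupp : μ (closedBall y₀ R)ᶜ = 0) {p : Y}
    (hp : IsMinOn (frechetFunction μ) univ p) : dist p y₀ ≤ R := by
  have hR : 0 ≤ R := by
    by_contra! hR
    rw [closedBall_eq_empty.2 hR, compl_empty, ← measureReal_eq_zero_iff] at hsupp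
    exact hμ.ne' hsupp
  have hQp : 0 ≤ frechetFunction μ p := integral_nonneg fun w => by positivity
  have hmin := frechetFunction_add_le_of_isMinOn hmid hcn hint hp y₀
  have hQ₀ := frechetFunction_le_of_measure_compl_closedBall y₀ hsupp
  have hsq : dist p y₀ ^ 2 ≤ R ^ 2 := le_of_mul_le_mul_left (by linarith) hμ
  exact (pow_le_pow_iff_left₀ dist_nonneg hR two_ne_zero).1 hsq

end Ball

section TotalVariation

variable {Y : Type*} [MeasurableSpace Y] (μ₁ μ₂ : Measure Y) [IsFiniteMeasure μ₁]
  [IsFiniteMeasure μ₂]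

theorem MeasureTheory.Measure.add_negPart_eq_add_posPart :
    μ₁ + (μ₁.toSignedMeasure - μ₂.toSignedMeasure).toJordanDecomposition.negPart =
      μ₂ + (μ₁.toSignedMeasure - μ₂.toSignedMeasure).toJordanDecomposition.posPart := by
  ext A hA
  have h := (μ₁.toSignedMeasure - μ₂.toSignedMeasure).apply_eq_posPart_real_sub_negPart_real hA
  rw [Measure.toSignedMeasure_sub_apply hA] at h
  rw [← ENNReal.toReal_eq_toReal_iff' (by finiteness) (by finiteness), Measure.add_apply,
    Measure.add_apply, ENNReal.toReal_add (by finiteness) (by finiteness),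
    ENNReal.toReal_add (by finiteness) (by finiteness)]
  simp only [measureReal_def] at h
  linarith

theorem abs_integral_sub_integral_le_mul_totalVariation {f : Y → ℝ} (hf : StronglyMeasurable f)
    {C : ℝ} (hC : ∀ w, |f w| ≤ C) :
    |∫ w, f w ∂μ₁ - ∫ w, f w ∂μ₂| ≤
      C * ((μ₁.toSignedMeasure - μ₂.toSignedMeasure).totalVariation univ).toReal := by
  set j := (μ₁.toSignedMeasure - μ₂.toSignedMeasure).toJordanDecomposition
  have hbound : ∀ ν : Measure Y, ∀ᵐ w ∂ν, ‖f w‖ ≤ C := fun ν => ae_of_all _ hC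
  have hint : ∀ (ν : Measure Y) [IsFiniteMeasure ν], Integrable f ν := fun ν _ =>
    .of_bound hf.aestronglyMeasurable C (hbound ν)
  have hsplit : ∫ w, f w ∂μ₁ - ∫ w, f w ∂μ₂ = ∫ w, f w ∂j.posPart - ∫ w, f w ∂j.negPart := by
    have h := congrArg (fun ν => ∫ w, f w ∂ν) (Measure.add_negPart_eq_add_posPart μ₁ μ₂)
    simp only [integral_add_measure (hint _) (hint _)] at h
    linarith
  have hpos := norm_integral_le_of_norm_le_const (μ := j.posPart) (hbound _)
  have hneg := norm_integral_le_of_norm_le_const (μ := j.negPart) (hbound _)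
  rw [Real.norm_eq_abs] at hpos hneg
  rw [hsplit, SignedMeasure.totalVariation, Measure.add_apply,
    ENNReal.toReal_add (by finiteness) (by finiteness)]
  simp only [measureReal_def] at hpos hneg
  linarith [abs_sub (∫ w, f w ∂j.posPart) (∫ w, f w ∂j.negPart)]

theorem abs_integral_sub_integral_le_mul_totalVariation_of_measure_compl {B : Set Y}
    (hB : MeasurableSet B) (h₁ : μ₁ Bᶜ = 0) (h₂ : μ₂ Bᶜ = 0) {f : Y → ℝ}
    (hf : StronglyMeasurable f) {C : ℝ} (hC : ∀ w ∈ B, |f w| ≤ C) (hC₀ : 0 ≤ C) :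
    |∫ w, f w ∂μ₁ - ∫ w, f w ∂μ₂| ≤
      C * ((μ₁.toSignedMeasure - μ₂.toSignedMeasure).totalVariation univ).toReal := by
  -- Replacing `f` by its indicator on `B` changes neither integral and makes the bound global.
  have hrestrict : ∀ ν : Measure Y, ν Bᶜ = 0 → ∫ w, B.indicator f w ∂ν = ∫ w, f w ∂ν :=
    fun ν hν => by rw [integral_indicator hB, Measure.restrict_eq_self_of_ae_mem (mem_ae_iff.2 hν)]
  rw [← hrestrict μ₁ h₁, ← hrestrict μ₂ h₂]
  refine abs_integral_sub_integral_le_mul_totalVariation μ₁ μ₂ (hf.indicator hB) fun w => ?_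
  by_cases hw : w ∈ B
  · simpa [hw] using hC w hw
  · simpa [hw] using hC₀

end TotalVariation

theorem abs_dist_sq_sub_dist_sq_le {Y : Type*} [MetricSpace Y] {y₀ a b w : Y} {R : ℝ}
    (ha : dist a y₀ ≤ R) (hb : dist b y₀ ≤ R) (hw : dist w y₀ ≤ R) :
    |dist a w ^ 2 - dist b w ^ 2| ≤ 4 * R * dist a b := by
  have haw : dist a w ≤ 2 * R := by linarith [dist_triangle_right a w y₀]
  have hbw : dist b w ≤ 2 * R := by linarith [dist_triangle_right b w y₀]
  rw [sq_sub_sq, abs_mul, abs_of_nonneg (by positivity)]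
  exact mul_le_mul (by linarith) (abs_dist_sub_le a b w) (abs_nonneg _)
    (by linarith [dist_nonneg (x := a) (y := w)])

theorem stmt_3_general {Y : Type*} [MetricSpace Y]
    [MeasurableSpace Y] [BorelSpace Y]
    (hmid : ∀ y₁ y₂ : Y, ∃ y₃ : Y,
      dist y₁ y₃ = dist y₁ y₂ / 2 ∧ dist y₂ y₃ = dist y₁ y₂ / 2)
    (hmedian : ∀ y y₁ y₂ y₃ : Y,
      dist y₁ y₃ = dist y₁ y₂ / 2 → dist y₂ y₃ = dist y₁ y₂ / 2 →
      (1 / 2) * dist y₁ y₂ ^ 2 ≤ dist y y₁ ^ 2 + dist y y₂ ^ 2 - 2 * dist y y₃ ^ 2)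
    (μ₁ μ₂ : Measure Y) [IsFiniteMeasure μ₁] [IsFiniteMeasure μ₂]
    (y₀ : Y) (R m ε : ℝ) (hm : 0 < m) (hε : 0 ≤ ε)
    (hsupp₁ : μ₁ (Metric.closedBall y₀ R)ᶜ = 0)
    (hsupp₂ : μ₂ (Metric.closedBall y₀ R)ᶜ = 0)
    (hmass₁ : ENNReal.ofReal m ≤ μ₁ Set.univ)
    (hmass₂ : ENNReal.ofReal m ≤ μ₂ Set.univ)
    (hint₁ : ∀ y : Y, Integrable (fun w => dist y w ^ 2) μ₁)
    (hint₂ : ∀ y : Y, Integrable (fun w => dist y w ^ 2) μ₂)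
    (htv : (μ₁.toSignedMeasure - μ₂.toSignedMeasure).totalVariation Set.univ
      ≤ ENNReal.ofReal ε)
    (p₁ p₂ : Y)
    (hp₁ : IsMinOn (fun y => ∫ w, dist y w ^ 2 ∂μ₁) Set.univ p₁)
    (hp₂ : IsMinOn (fun y => ∫ w, dist y w ^ 2 ∂μ₂) Set.univ p₂) :
    dist p₁ p₂ ≤ 4 * ε * R / m := by
  have hM₁ : m ≤ μ₁.real univ := (ENNReal.ofReal_le_iff_le_toReal (measure_ne_top _ _)).1 hmass₁
  have hM₂ : m ≤ μ₂.real univ := (ENNReal.ofReal_le_iff_le_toReal (measure_ne_top _ _)).1 hmass₂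
  have hball₁ := dist_le_of_isMinOn_frechetFunction hmid hmedian hint₁ (hm.trans_le hM₁) hsupp₁ hp₁
  have hball₂ := dist_le_of_isMinOn_frechetFunction hmid hmedian hint₂ (hm.trans_le hM₂) hsupp₂ hp₂
  have hvar₁ := frechetFunction_add_le_of_isMinOn hmid hmedian hint₁ hp₁ p₂
  have hvar₂ := frechetFunction_add_le_of_isMinOn hmid hmedian hint₂ hp₂ p₁
  have hR : 0 ≤ R := dist_nonneg.trans hball₁
  have hdiff := abs_integral_sub_integral_le_mul_totalVariation_of_measure_compl μ₁ μ₂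
    isClosed_closedBall.measurableSet hsupp₁ hsupp₂
    (f := fun w => dist p₂ w ^ 2 - dist p₁ w ^ 2) (by fun_prop)
    (fun w hw => abs_dist_sq_sub_dist_sq_le hball₂ hball₁ hw) (by positivity)
  rw [integral_sub (hint₁ p₂) (hint₁ p₁), integral_sub (hint₂ p₂) (hint₂ p₁)] at hdiff
  have htv' := ENNReal.toReal_le_of_le_ofReal hε htv
  unfold frechetFunction at hvar₁ hvar₂
  rw [dist_comm p₂ p₁] at hvar₂ hdiff
  have hquad : 2 * m * dist p₁ p₂ ^ 2 ≤ 4 * R * dist p₁ p₂ * ε := by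
    linarith [le_abs_self (∫ w, dist p₂ w ^ 2 ∂μ₁ - ∫ w, dist p₁ w ^ 2 ∂μ₁ -
      (∫ w, dist p₂ w ^ 2 ∂μ₂ - ∫ w, dist p₁ w ^ 2 ∂μ₂)),
      mul_le_mul_of_nonneg_right hM₁ (sq_nonneg (dist p₁ p₂)),
      mul_le_mul_of_nonneg_right hM₂ (sq_nonneg (dist p₁ p₂)),
      mul_le_mul_of_nonneg_left htv' (by positivity : 0 ≤ 4 * R * dist p₁ p₂)]
  rw [le_div_iff₀ hm]
  nlinarith [dist_nonneg (x := p₁) (y := p₂), mul_nonneg hε hR]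

/-- Let `Y` be a proper CAT(0) space (encoded by midpoints and the median
inequality) and `μ₁, μ₂` positive finite Borel measures supported in a ball `B(y₀,R)`,
of total mass at least `m > 0`, with total variation distance `‖μ₁ - μ₂‖ ≤ ε`. Then
their centers of mass (the unique minimizers `p₁, p₂` of `Q_{μᵢ}(y) = ∫ d(y,w)² dμᵢ`)
satisfy `d(p₁,p₂) ≤ 4 ε R / m`. -/
theorem stmt_3 {Y : Type*} [MetricSpace Y] [ProperSpace Y]
    [MeasurableSpace Y] [BorelSpace Y]
    (hmid : ∀ y₁ y₂ : Y, ∃ y₃ : Y,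
      dist y₁ y₃ = dist y₁ y₂ / 2 ∧ dist y₂ y₃ = dist y₁ y₂ / 2)
    (hmedian : ∀ y y₁ y₂ y₃ : Y,
      dist y₁ y₃ = dist y₁ y₂ / 2 → dist y₂ y₃ = dist y₁ y₂ / 2 →
      (1 / 2) * dist y₁ y₂ ^ 2 ≤ dist y y₁ ^ 2 + dist y y₂ ^ 2 - 2 * dist y y₃ ^ 2)
    (μ₁ μ₂ : Measure Y) [IsFiniteMeasure μ₁] [IsFiniteMeasure μ₂]
    (y₀ : Y) (R m ε : ℝ) (hR : 0 < R) (hm : 0 < m) (hε : 0 ≤ ε)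
    (hsupp₁ : μ₁ (Metric.closedBall y₀ R)ᶜ = 0)
    (hsupp₂ : μ₂ (Metric.closedBall y₀ R)ᶜ = 0)
    (hmass₁ : ENNReal.ofReal m ≤ μ₁ Set.univ)
    (hmass₂ : ENNReal.ofReal m ≤ μ₂ Set.univ)
    (hint₁ : ∀ y : Y, Integrable (fun w => dist y w ^ 2) μ₁)
    (hint₂ : ∀ y : Y, Integrable (fun w => dist y w ^ 2) μ₂)
    (htv : (μ₁.toSignedMeasure - μ₂.toSignedMeasure).totalVariation Set.univ
      ≤ ENNReal.ofReal ε)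
    (p₁ p₂ : Y)
    (hp₁ : IsMinOn (fun y => ∫ w, dist y w ^ 2 ∂μ₁) Set.univ p₁)
    (hp₂ : IsMinOn (fun y => ∫ w, dist y w ^ 2 ∂μ₂) Set.univ p₂) :
    dist p₁ p₂ ≤ 4 * ε * R / m :=
  stmt_3_general hmid hmedian μ₁ μ₂ y₀ R m ε hm hε hsupp₁ hsupp₂ hmass₁ hmass₂ hint₁ hint₂ htv p₁ p₂
    hp₁ hp₂
end
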